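/- arXiv:0709.1506 — 3 statements merged into one kernel-verified Lean document; each statement's English description precedes it below -/
import Mathlib

section
/- Let $\sigma\in(0,1)$, $\eta>0$, $s>0$, and $x_1,\ldots,x_n\in\mathbb{R}$. If there exists $z\in[s,(1+\eta\sigma)s]$ with $n^{-1}\sum_{i=1}^n (x_i/z-1)^2 \le \sigma^2$, then $n^{-1}\sum_{i=1}^n (x_i/s-1)^2 \le (1+\eta\sigma)^2(1+\eta)^2\sigma^2$. -/
/-!
With `r = z / s ∈ [1, 1 + ησ]` one has `x / s - 1 = r (x / z - 1) + (r - 1)`. Young's inequality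
`(a + b)² ≤ (1 + η) a² + (1 + η⁻¹) b²`, averaged over `i`, bounds the mean square at scale `s` by
`(1 + η) r² σ² + (1 + η⁻¹) (ησ)² = (1 + η) σ² ((1 + ησ)² + η)`, which is at most the claimed bound.
-/

open Finset

section

variable {K : Type*} [Field K] [LinearOrder K] [IsStrictOrderedRing K]

theorem add_sq_le_one_add_mul_sq_add {ε : K} (hε : 0 < ε) (a b : K) :
    (a + b) ^ 2 ≤ (1 + ε) * a ^ 2 + (1 + ε⁻¹) * b ^ 2 := by
  have key : 0 ≤ ε * ((1 + ε) * a ^ 2 + (1 + ε⁻¹) * b ^ 2 - (a + b) ^ 2) := by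
    have : ε * ((1 + ε) * a ^ 2 + (1 + ε⁻¹) * b ^ 2 - (a + b) ^ 2) = (ε * a - b) ^ 2 := by
      field_simp; ring
    exact this ▸ sq_nonneg _
  exact sub_nonneg.mp (nonneg_of_mul_nonneg_right (by linarith) hε)

theorem sum_add_sq_div_card_le {ι : Type*} [Fintype ι] {ε : K} (hε : 0 < ε) (f : ι → K) (c : K) :
    (∑ i, (f i + c) ^ 2) / Fintype.card ι ≤
      (1 + ε) * ((∑ i, f i ^ 2) / Fintype.card ι) + (1 + ε⁻¹) * c ^ 2 := by
  have hsum : ∑ i, (f i + c) ^ 2 ≤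
      (1 + ε) * ∑ i, f i ^ 2 + Fintype.card ι * ((1 + ε⁻¹) * c ^ 2) := by
    simpa [sum_add_distrib, ← mul_sum] using
      sum_le_sum fun i (_ : i ∈ univ) => add_sq_le_one_add_mul_sq_add hε (f i) c
  calc (∑ i, (f i + c) ^ 2) / Fintype.card ι
      ≤ ((1 + ε) * ∑ i, f i ^ 2 + Fintype.card ι * ((1 + ε⁻¹) * c ^ 2)) / Fintype.card ι := by
        gcongr
    _ = (1 + ε) * ((∑ i, f i ^ 2) / Fintype.card ι)
          + (Fintype.card ι / Fintype.card ι : K) * ((1 + ε⁻¹) * c ^ 2) := by ring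
    _ ≤ (1 + ε) * ((∑ i, f i ^ 2) / Fintype.card ι) + 1 * ((1 + ε⁻¹) * c ^ 2) := by
        gcongr
        exact div_self_le_one _
    _ = _ := by rw [one_mul]

end

theorem div_sub_one_eq_mul_div_sub_one_add {K : Type*} [Field K] {s z : K} (hs : s ≠ 0)
    (hz : z ≠ 0) (x : K) : x / s - 1 = z / s * (x / z - 1) + (z / s - 1) := by
  field_simp; ring

theorem stmt_3_general (n : ℕ) (σ η s : ℝ)
    (hη : 0 < η) (hs : 0 < s) (x : Fin n → ℝ)
    (hz : ∃ z ∈ Set.Icc s ((1 + η * σ) * s),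
      (∑ i, (x i / z - 1) ^ 2) / n ≤ σ ^ 2) :
    (∑ i, (x i / s - 1) ^ 2) / n ≤ (1 + η * σ) ^ 2 * (1 + η) ^ 2 * σ ^ 2 := by
  obtain ⟨z, ⟨hsz, hzs⟩, hQ⟩ := hz
  set r := z / s
  have hr : 1 ≤ r := (one_le_div hs).mpr hsz
  have hr' : r ≤ 1 + η * σ := (div_le_iff₀ hs).mpr hzs
  have hησ : 0 ≤ η * σ := by linarith
  calc (∑ i, (x i / s - 1) ^ 2) / n
      = (∑ i, (r * (x i / z - 1) + (r - 1)) ^ 2) / (Fintype.card (Fin n) : ℝ) := by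
        rw [Fintype.card_fin]
        congr 2 with i
        rw [div_sub_one_eq_mul_div_sub_one_add hs.ne' (hs.trans_le hsz).ne']
    _ ≤ (1 + η) * ((∑ i, (r * (x i / z - 1)) ^ 2) / (Fintype.card (Fin n) : ℝ))
          + (1 + η⁻¹) * (r - 1) ^ 2 :=
        sum_add_sq_div_card_le hη _ _
    _ = (1 + η) * r ^ 2 * ((∑ i, (x i / z - 1) ^ 2) / n) + (1 + η⁻¹) * (r - 1) ^ 2 := by
        simp only [mul_pow, ← mul_sum, Fintype.card_fin]; ring
    _ ≤ (1 + η) * (1 + η * σ) ^ 2 * σ ^ 2 + (1 + η⁻¹) * (η * σ) ^ 2 := by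
        have : 0 < η⁻¹ := inv_pos.mpr hη
        gcongr
        linarith
    _ = (1 + η) * σ ^ 2 * ((1 + η * σ) ^ 2 + η) := by field_simp; ring
    _ ≤ (1 + η) * σ ^ 2 * ((1 + η * σ) ^ 2 + η * (1 + η * σ) ^ 2) := by
        gcongr
        exact le_mul_of_one_le_right hη.le (one_le_pow₀ (by linarith))
    _ = (1 + η * σ) ^ 2 * (1 + η) ^ 2 * σ ^ 2 := by ring

/-- Deterministic scaling lemma (Lemma 2): if some `z ∈ [s, (1+ησ)s]` satisfies
`n⁻¹ ∑ (xᵢ/z - 1)² ≤ σ²`, then `n⁻¹ ∑ (xᵢ/s - 1)² ≤ (1+ησ)²(1+η)²σ²`. -/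
theorem stmt_3 (n : ℕ) (hn : 0 < n) (σ η s : ℝ) (hσ : σ ∈ Set.Ioo (0 : ℝ) 1)
    (hη : 0 < η) (hs : 0 < s) (x : Fin n → ℝ)
    (hz : ∃ z ∈ Set.Icc s ((1 + η * σ) * s),
      (∑ i, (x i / z - 1) ^ 2) / n ≤ σ ^ 2) :
    (∑ i, (x i / s - 1) ^ 2) / n ≤ (1 + η * σ) ^ 2 * (1 + η) ^ 2 * σ ^ 2 :=
  stmt_3_general n σ η s hη hs x hz
end

section
/- Fix $z>0$, and suppose the probability density $f$ is continuous at $z$, $f(z)>0$, and $\sup f<\infty$. Then for every $p>-1$, as $t\to\infty$, $\int_{\mathbb{R}} |u|^p e^{-tu^2} f(z+uz)\,du \sim f(z)\,\Gamma((p+1)/2)\, t^{-(p+1)/2}$. -/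
open Filter MeasureTheory Real Bornology Topology

/-!
With `φ(x) = |x|^p e^{-x²} / Γ((p+1)/2)`, a probability density by the Gamma integral, one has
`√t φ(√t u) = t^{(p+1)/2} |u|^p e^{-t u²} / Γ((p+1)/2)`. Since `|x| φ(x) → 0` at infinity, the
rescalings `c φ(c ·)` form an approximate identity as `c = √t → ∞`, so their integrals against
the integrable function `u ↦ f(z + u z)`, continuous at `0`, tend to its value `f z` there.
-/

theorem integral_abs_rpow_mul_exp_neg_sq {p : ℝ} (hp : -1 < p) :
    ∫ x : ℝ, |x| ^ p * exp (-x ^ 2) = Gamma ((p + 1) / 2) := by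
  have h := integral_comp_abs (f := fun y : ℝ => y ^ p * exp (-y ^ 2))
  simp only [sq_abs] at h
  have h_sq : ∫ x in Set.Ioi (0 : ℝ), x ^ p * exp (-x ^ 2)
      = ∫ x in Set.Ioi (0 : ℝ), x ^ p * exp (-x ^ (2 : ℝ)) := by
    simp only [rpow_two]
  rw [h, h_sq, integral_rpow_mul_exp_neg_rpow two_pos hp]
  ring

theorem tendsto_abs_mul_abs_rpow_mul_exp_neg_sq_cobounded (p : ℝ) :
    Tendsto (fun x : ℝ => |x| * (|x| ^ p * exp (-x ^ 2))) (cobounded ℝ) (𝓝 0) := by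
  have h_sq : Tendsto (fun x : ℝ => x ^ 2) (cobounded ℝ) atTop := by
    refine ((tendsto_pow_atTop two_ne_zero).comp tendsto_norm_cobounded_atTop).congr fun x => ?_
    simp only [Function.comp_apply, Real.norm_eq_abs, sq_abs]
  have h_lim := (tendsto_rpow_mul_exp_neg_mul_atTop_nhds_zero ((p + 1) / 2) 1 one_pos).comp h_sq
  refine h_lim.congr' ?_
  filter_upwards [h_sq.eventually_gt_atTop 0] with x hx
  have hx0 : |x| ≠ 0 := abs_ne_zero.2 (by rintro rfl; simp at hx)
  rw [Function.comp_apply, ← sq_abs, ← rpow_natCast, ← rpow_mul (abs_nonneg x),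
    ← mul_assoc, mul_comm |x|, ← rpow_add_one hx0]
  norm_num [mul_div_cancel₀]

theorem sqrt_mul_abs_rpow_mul_exp_neg_sq {t : ℝ} (ht : 0 < t) (p x : ℝ) :
    √t * (|√t * x| ^ p * exp (-(√t * x) ^ 2)) =
      t ^ ((p + 1) / 2) * (|x| ^ p * exp (-t * x ^ 2)) := by
  have h_pow : √t * √t ^ p = t ^ ((p + 1) / 2) := by
    rw [mul_comm, ← rpow_add_one (sqrt_pos.2 ht).ne', sqrt_eq_rpow, ← rpow_mul ht.le]
    ring_nf
  rw [abs_mul, abs_of_nonneg (sqrt_nonneg t), mul_rpow (sqrt_nonneg t) (abs_nonneg x), mul_pow,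
    sq_sqrt ht.le, ← h_pow]
  ring_nf

theorem tendsto_rpow_smul_integral_abs_rpow_mul_exp_neg_mul_sq
    {E : Type*} [NormedAddCommGroup E] [NormedSpace ℝ E] [CompleteSpace E]
    {g : ℝ → E} (hg : Integrable g) (h'g : ContinuousAt g 0) {p : ℝ} (hp : -1 < p) :
    Tendsto (fun t : ℝ => t ^ ((p + 1) / 2) • ∫ u, (|u| ^ p * exp (-t * u ^ 2)) • g u)
      atTop (𝓝 (Gamma ((p + 1) / 2) • g 0)) := by
  set Γ := Gamma ((p + 1) / 2)
  have hΓ : 0 < Γ := Gamma_pos_of_pos (by linarith)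
  set φ : ℝ → ℝ := fun x => Γ⁻¹ * (|x| ^ p * exp (-x ^ 2))
  have hφ_nonneg : ∀ x, 0 ≤ φ x := fun x => by positivity
  have hφ_int : ∫ x, φ x = 1 := by
    rw [integral_const_mul, integral_abs_rpow_mul_exp_neg_sq hp, inv_mul_cancel₀ hΓ.ne']
  have hφ_decay : Tendsto (fun x : ℝ => ‖x‖ ^ Module.finrank ℝ ℝ * φ x) (cobounded ℝ) (𝓝 0) := by
    simpa [φ, mul_left_comm |_|] using
      (tendsto_abs_mul_abs_rpow_mul_exp_neg_sq_cobounded p).const_mul Γ⁻¹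
  have h_peak := ((tendsto_integral_comp_smul_smul_of_integrable hφ_nonneg hφ_int hφ_decay hg
    h'g).comp tendsto_sqrt_atTop).const_smul Γ
  refine h_peak.congr' ?_
  filter_upwards [eventually_gt_atTop 0] with t ht
  simp only [Function.comp_apply, Module.finrank_self, pow_one, smul_eq_mul, ← integral_smul,
    smul_smul]
  congr! 2 with u
  simp only [φ]
  rw [mul_left_comm, mul_inv_cancel_left₀ hΓ.ne', sqrt_mul_abs_rpow_mul_exp_neg_sq ht]

theorem stmt_10_general (f : ℝ → ℝ)
    (hdens : ∫ x, f x = 1)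
    (z : ℝ) (hz : 0 < z) (hcont : ContinuousAt f z) (hfz : 0 < f z)
    (p : ℝ) (hp : -1 < p) :
    Tendsto (fun t : ℝ =>
        (∫ u, |u| ^ p * Real.exp (-t * u ^ 2) * f (z + u * z)) /
          (f z * Real.Gamma ((p + 1) / 2) * t ^ (-((p + 1) / 2))))
      atTop (nhds 1) := by
  have hg : Integrable fun u => f (z + u * z) :=
    ((integrable_of_integral_eq_one hdens).comp_add_left z).comp_mul_right' hz.ne'
  have h'g : ContinuousAt (fun u => f (z + u * z)) 0 :=
    ContinuousAt.comp_of_eq hcont (by fun_prop) (by simp)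
  have hΓ : 0 < Gamma ((p + 1) / 2) := Gamma_pos_of_pos (by linarith)
  have h_lim := (tendsto_rpow_smul_integral_abs_rpow_mul_exp_neg_mul_sq hg h'g hp).div_const
    (Gamma ((p + 1) / 2) * f z)
  simp only [smul_eq_mul, add_zero, zero_mul, div_self (mul_pos hΓ hfz).ne'] at h_lim
  refine h_lim.congr' ?_
  filter_upwards [eventually_gt_atTop 0] with t ht
  rw [rpow_neg ht.le]
  field_simp

/-- Lemma 7 (Laplace-type asymptotic): if the density `f` is continuous at
`z > 0` with `f z > 0` and `sup f < ∞`, then for `p > -1`, as `t → ∞`,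
`∫ |u|^p e^{-tu²} f(z+uz) du ∼ f(z) Γ((p+1)/2) t^{-(p+1)/2}`. -/
theorem stmt_10 (f : ℝ → ℝ) (hmeas : Measurable f) (hnonneg : ∀ x, 0 ≤ f x)
    (hdens : ∫ x, f x = 1) (hbdd : ∃ A, ∀ x, f x ≤ A)
    (z : ℝ) (hz : 0 < z) (hcont : ContinuousAt f z) (hfz : 0 < f z)
    (p : ℝ) (hp : -1 < p) :
    Tendsto (fun t : ℝ =>
        (∫ u, |u| ^ p * Real.exp (-t * u ^ 2) * f (z + u * z)) /
          (f z * Real.Gamma ((p + 1) / 2) * t ^ (-((p + 1) / 2))))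
      atTop (nhds 1) :=
  stmt_10_general f hdens z hz hcont hfz p hp
end

section
/- Fix $z>0$ with $f$ continuous and nonzero at $z$ and $\sup f<\infty$. Define $h(t) = \log[z\int e^{-tu^2} f(z+zu)\,du]$ for $t\ge 0$. Then $h$ is finite, $h'(t)<0$, $h''(t)>0$ for $t>0$, and $h'(t) \sim -(2t)^{-1}$ as $t\to\infty$. -/
/-! Write `g(u) = f(z + zu)` and `M_n(t) = ∫ uⁿ e^{-tu²} g(u) du`. Differentiating under
the integral sign gives `M_n' = -M_{n+2}`, hence `h' = -M₂/M₀` and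
`h'' = (M₄M₀ - M₂²)/M₀²`. Since `g` is positive near `0`, `M₀, M₂ > 0`, and so is
`∫ (u² - M₂/M₀)² e^{-tu²} g(u) du = M₄ - M₂²/M₀`. The substitution `u = v/√t` turns
`t M₂/M₀` into the ratio of `∫ v² e^{-v²} g(v/√t) dv` and `∫ e^{-v²} g(v/√t) dv`, which by
dominated convergence tends to `(√π/2) g(0) / (√π g(0)) = 1/2`. -/

open Filter MeasureTheory Real Set Topology

noncomputable def gaussMoment (g : ℝ → ℝ) (n : ℕ) (t : ℝ) : ℝ :=
  ∫ u, u ^ n * exp (-t * u ^ 2) * g u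

lemma gaussMoment_zero (g : ℝ → ℝ) (t : ℝ) :
    gaussMoment g 0 t = ∫ u, exp (-t * u ^ 2) * g u := by
  simp only [gaussMoment, pow_zero, one_mul]

lemma integrable_pow_mul_exp_neg_mul_sq {b : ℝ} (hb : 0 < b) (n : ℕ) :
    Integrable fun x : ℝ => x ^ n * exp (-b * x ^ 2) := by
  simpa [rpow_natCast] using
    integrable_rpow_mul_exp_neg_mul_sq hb (s := n) (by linarith [n.cast_nonneg (α := ℝ)])

lemma integrable_exp_neg_mul_sq_mul {g : ℝ → ℝ} (hg : Integrable g) {t : ℝ} (ht : 0 ≤ t) :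
    Integrable fun u => exp (-t * u ^ 2) * g u := by
  refine hg.bdd_mul (c := 1) (by fun_prop) (ae_of_all _ fun u => ?_)
  rw [norm_of_nonneg (exp_pos _).le, exp_le_one_iff]
  nlinarith [sq_nonneg u]

lemma integral_pos_of_eventually_pos_nhdsGT {φ : ℝ → ℝ} (hφ : Integrable φ) (h0 : 0 ≤ φ)
    {a : ℝ} (hpos : ∀ᶠ u in 𝓝[>] a, 0 < φ u) : 0 < ∫ u, φ u := by
  obtain ⟨b, hab, hb⟩ := (nhdsGT_basis a).eventually_iff.1 hpos
  rw [integral_pos_iff_support_of_nonneg h0 hφ]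
  calc (0 : ENNReal) < volume (Ioo a b) := by simp [hab]
    _ ≤ volume (Function.support φ) := measure_mono fun u hu => (hb hu).ne'

lemma integral_pow_mul_exp_neg_sq_mul_comp_div_sqrt (g : ℝ → ℝ) (n : ℕ) {t : ℝ}
    (ht : 0 < t) :
    ∫ v, v ^ n * exp (-v ^ 2) * g (v / √t) = √t ^ (n + 1) * gaussMoment g n t := by
  have hs : 0 < √t := sqrt_pos.2 ht
  have hpt : ∀ v, v ^ n * exp (-v ^ 2) * g (v / √t)
      = √t ^ n * ((v / √t) ^ n * exp (-t * (v / √t) ^ 2) * g (v / √t)) := by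
    intro v
    rw [div_pow, div_pow, sq_sqrt ht.le]
    field_simp
  simp_rw [hpt]
  rw [integral_const_mul, Measure.integral_comp_div (fun u => u ^ n * exp (-t * u ^ 2) * g u),
    abs_of_pos hs, smul_eq_mul, gaussMoment, pow_succ, mul_assoc]

section Bounded

variable {g : ℝ → ℝ} {A : ℝ}

lemma integrable_pow_mul_exp_neg_mul_sq_mul (hg : Measurable g) (hA : ∀ x, |g x| ≤ A)
    {b : ℝ} (hb : 0 < b) (n : ℕ) :
    Integrable fun u => u ^ n * exp (-b * u ^ 2) * g u :=
  (integrable_pow_mul_exp_neg_mul_sq hb n).mul_bdd hg.aestronglyMeasurable (ae_of_all _ hA)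

lemma hasDerivAt_gaussMoment (hg : Measurable g) (hA : ∀ x, |g x| ≤ A)
    {t : ℝ} (ht : 0 < t) (n : ℕ) :
    HasDerivAt (gaussMoment g n) (-gaussMoment g (n + 2) t) t := by
  have hmeas : ∀ s, AEStronglyMeasurable (fun u => u ^ n * exp (-s * u ^ 2) * g u) :=
    fun s => (by fun_prop : Measurable _).aestronglyMeasurable
  have hbound : ∀ᵐ u, ∀ s ∈ Metric.ball t (t / 2),
      ‖-(u ^ (n + 2) * exp (-s * u ^ 2) * g u)‖ ≤ |u ^ (n + 2) * exp (-(t / 2) * u ^ 2)| * A := by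
    refine ae_of_all _ fun u s hs => ?_
    have hs' : t / 2 ≤ s := by
      rw [Metric.mem_ball, dist_eq] at hs
      linarith [(abs_lt.1 hs).1]
    have hexp : exp (-s * u ^ 2) ≤ exp (-(t / 2) * u ^ 2) :=
      exp_le_exp.2 (by nlinarith [sq_nonneg u])
    rw [norm_neg, norm_eq_abs, abs_mul, abs_mul, abs_mul, abs_of_pos (exp_pos _),
      abs_of_pos (exp_pos _)]
    exact mul_le_mul (mul_le_mul_of_nonneg_left hexp (abs_nonneg _)) (hA u) (abs_nonneg _)
      (by positivity)
  have hderiv : ∀ᵐ u, ∀ s ∈ Metric.ball t (t / 2), HasDerivAt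
      (fun s => u ^ n * exp (-s * u ^ 2) * g u) (-(u ^ (n + 2) * exp (-s * u ^ 2) * g u)) s :=
    ae_of_all _ fun u s _ => ((((hasDerivAt_neg s).mul_const (u ^ 2)).exp.const_mul (u ^ n)
      ).mul_const (g u)).congr_deriv (by ring)
  have key := hasDerivAt_integral_of_dominated_loc_of_deriv_le
    (Metric.ball_mem_nhds t (half_pos ht)) (Eventually.of_forall hmeas)
    (integrable_pow_mul_exp_neg_mul_sq_mul hg hA ht n)
    (by fun_prop : Measurable _).aestronglyMeasurable hbound
    ((integrable_pow_mul_exp_neg_mul_sq (half_pos ht) (n + 2)).abs.mul_const A) hderiv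
  have h2 := key.2
  rw [integral_neg] at h2
  exact h2

lemma integral_mul_exp_neg_mul_sq_mul_pos {q : ℝ → ℝ} {t : ℝ}
    (hq : Integrable fun u => q u * exp (-t * u ^ 2) * g u) (hq0 : ∀ u, 0 ≤ q u)
    (hqpos : ∀ᶠ u in 𝓝[>] 0, 0 < q u) (h0 : ∀ x, 0 ≤ g x) (hc : ContinuousAt g 0)
    (hg0 : 0 < g 0) : 0 < ∫ u, q u * exp (-t * u ^ 2) * g u := by
  refine integral_pos_of_eventually_pos_nhdsGT (a := 0) hq
    (fun u => mul_nonneg (mul_nonneg (hq0 u) (exp_pos _).le) (h0 u)) ?_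
  have hgpos : ∀ᶠ u in 𝓝[>] 0, 0 < g u :=
    nhdsWithin_le_nhds (hc.eventually (lt_mem_nhds hg0))
  filter_upwards [hqpos, hgpos] with u hqu hgu
  positivity

lemma gaussMoment_pos (hg : Measurable g) (hA : ∀ x, |g x| ≤ A) (h0 : ∀ x, 0 ≤ g x)
    (hc : ContinuousAt g 0) (hg0 : 0 < g 0) {t : ℝ} (ht : 0 < t) {n : ℕ} (hn : Even n) :
    0 < gaussMoment g n t :=
  integral_mul_exp_neg_mul_sq_mul_pos (integrable_pow_mul_exp_neg_mul_sq_mul hg hA ht n)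
    hn.pow_nonneg (eventually_mem_nhdsWithin.mono fun _ hu => pow_pos hu n) h0 hc hg0

lemma sq_gaussMoment_two_lt (hg : Measurable g) (hA : ∀ x, |g x| ≤ A) (h0 : ∀ x, 0 ≤ g x)
    (hc : ContinuousAt g 0) (hg0 : 0 < g 0) {t : ℝ} (ht : 0 < t) :
    gaussMoment g 2 t ^ 2 < gaussMoment g 4 t * gaussMoment g 0 t := by
  have hM0 := gaussMoment_pos hg hA h0 hc hg0 ht Even.zero
  have hM2 := gaussMoment_pos hg hA h0 hc hg0 ht even_two
  set c := gaussMoment g 2 t / gaussMoment g 0 t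
  have hI := integrable_pow_mul_exp_neg_mul_sq_mul hg hA ht
  have hexpand : (fun u => (u ^ 2 - c) ^ 2 * exp (-t * u ^ 2) * g u) = fun u =>
      u ^ 4 * exp (-t * u ^ 2) * g u - 2 * c * (u ^ 2 * exp (-t * u ^ 2) * g u)
        + c ^ 2 * (u ^ 0 * exp (-t * u ^ 2) * g u) := by
    funext u; ring
  have hint : Integrable fun u => (u ^ 2 - c) ^ 2 * exp (-t * u ^ 2) * g u :=
    hexpand ▸ ((hI 4).sub ((hI 2).const_mul _)).add ((hI 0).const_mul _)
  have hval : ∫ u, (u ^ 2 - c) ^ 2 * exp (-t * u ^ 2) * g u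
      = gaussMoment g 4 t - 2 * c * gaussMoment g 2 t + c ^ 2 * gaussMoment g 0 t := by
    rw [hexpand, integral_add _ ((hI 0).const_mul _), integral_sub (hI 4) ((hI 2).const_mul _),
      integral_const_mul, integral_const_mul]
    · rfl
    · exact (hI 4).sub ((hI 2).const_mul _)
  have hsq_lt : ∀ᶠ u in 𝓝[>] (0 : ℝ), u ^ 2 < c :=
    nhdsWithin_le_nhds (((continuous_pow 2).tendsto' 0 0 (by simp)).eventually
      (gt_mem_nhds (div_pos hM2 hM0)))
  have hpos := integral_mul_exp_neg_mul_sq_mul_pos hint (fun u => sq_nonneg _)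
    (hsq_lt.mono fun u hu => sq_pos_of_neg (by linarith)) h0 hc hg0
  rw [hval] at hpos
  have key : (gaussMoment g 4 t - 2 * c * gaussMoment g 2 t + c ^ 2 * gaussMoment g 0 t)
      * gaussMoment g 0 t = gaussMoment g 4 t * gaussMoment g 0 t - gaussMoment g 2 t ^ 2 := by
    simp only [c]
    field_simp
    ring
  nlinarith [mul_pos hpos hM0]

lemma hasDerivAt_log_mul_gaussMoment_zero (hg : Measurable g) (hA : ∀ x, |g x| ≤ A) {z t : ℝ}
    (hz : z ≠ 0) (ht : 0 < t) (hM0 : gaussMoment g 0 t ≠ 0) :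
    HasDerivAt (fun s => log (z * gaussMoment g 0 s))
      (-(gaussMoment g 2 t / gaussMoment g 0 t)) t :=
  (((hasDerivAt_gaussMoment hg hA ht 0).const_mul z).log (mul_ne_zero hz hM0)).congr_deriv
    (by field_simp)

lemma hasDerivAt_neg_gaussMoment_two_div_gaussMoment_zero (hg : Measurable g)
    (hA : ∀ x, |g x| ≤ A) {t : ℝ} (ht : 0 < t) (hM0 : gaussMoment g 0 t ≠ 0) :
    HasDerivAt (fun s => -(gaussMoment g 2 s / gaussMoment g 0 s))
      ((gaussMoment g 4 t * gaussMoment g 0 t - gaussMoment g 2 t ^ 2) / gaussMoment g 0 t ^ 2)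
      t :=
  ((hasDerivAt_gaussMoment hg hA ht 2).div (hasDerivAt_gaussMoment hg hA ht 0) hM0
    ).neg.congr_deriv (by ring)

lemma tendsto_integral_pow_mul_exp_neg_sq_mul_comp_div_sqrt (hg : Measurable g)
    (hA : ∀ x, |g x| ≤ A) (hc : ContinuousAt g 0) (n : ℕ) :
    Tendsto (fun t => ∫ v, v ^ n * exp (-v ^ 2) * g (v / √t)) atTop
      (𝓝 (∫ v, v ^ n * exp (-v ^ 2) * g 0)) := by
  refine tendsto_integral_filter_of_dominated_convergence (fun v => |v ^ n * exp (-v ^ 2)| * A)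
    (Eventually.of_forall fun t => (by fun_prop : Measurable _).aestronglyMeasurable)
    (Eventually.of_forall fun t => ae_of_all _ fun v => ?_) ?_ (ae_of_all _ fun v => ?_)
  · rw [norm_eq_abs, abs_mul]
    exact mul_le_mul_of_nonneg_left (hA _) (abs_nonneg _)
  · simpa using (integrable_pow_mul_exp_neg_mul_sq one_pos n).abs.mul_const A
  · exact (hc.tendsto.comp (tendsto_const_nhds.div_atTop tendsto_sqrt_atTop)).const_mul _

end Bounded

lemma integral_exp_neg_sq : ∫ v : ℝ, exp (-v ^ 2) = √π := by
  simpa using integral_gaussian 1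

lemma integral_sq_mul_exp_neg_sq : ∫ v : ℝ, v ^ 2 * exp (-v ^ 2) = √π / 2 := by
  -- differentiate `∫ e^{-sv²} dv = √(π/s)` at `s = 1`
  have hM0 : gaussMoment (fun _ => 1) 0 = fun s => √π / √s := by
    funext s
    rw [gaussMoment_zero]
    simp only [mul_one, integral_gaussian, sqrt_div pi_pos.le]
  have hderiv : HasDerivAt (fun s => √π / √s) (-(√π / 2)) 1 :=
    ((hasDerivAt_const 1 √π).div (hasDerivAt_sqrt one_ne_zero) (by simp)).congr_deriv
      (by simp [div_eq_mul_inv])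
  have h := hasDerivAt_gaussMoment (g := fun _ => 1) (A := 1) measurable_const (by simp)
    one_pos 0
  rw [hM0] at h
  simpa [gaussMoment] using h.unique hderiv

lemma tendsto_mul_gaussMoment_two_div_gaussMoment_zero {g : ℝ → ℝ} {A : ℝ} (hg : Measurable g)
    (hA : ∀ x, |g x| ≤ A) (hc : ContinuousAt g 0) (hg0 : g 0 ≠ 0) :
    Tendsto (fun t => t * gaussMoment g 2 t / gaussMoment g 0 t) atTop (𝓝 (1 / 2)) := by
  have hlim2 := tendsto_integral_pow_mul_exp_neg_sq_mul_comp_div_sqrt hg hA hc 2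
  have hlim0 := tendsto_integral_pow_mul_exp_neg_sq_mul_comp_div_sqrt hg hA hc 0
  have hπ : √π ≠ 0 := (sqrt_pos.2 pi_pos).ne'
  simp only [integral_mul_const, integral_sq_mul_exp_neg_sq, integral_exp_neg_sq, pow_zero,
    one_mul] at hlim2 hlim0
  have hlim := hlim2.div hlim0 (mul_ne_zero hπ hg0)
  rw [show √π / 2 * g 0 / (√π * g 0) = 1 / 2 by field_simp] at hlim
  refine hlim.congr' ?_
  filter_upwards [eventually_gt_atTop 0] with t ht
  have h0 : ∫ v, exp (-v ^ 2) * g (v / √t) = √t * gaussMoment g 0 t := by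
    simpa using integral_pow_mul_exp_neg_sq_mul_comp_div_sqrt g 0 ht
  have hs : √t ≠ 0 := (sqrt_pos.2 ht).ne'
  rw [Pi.div_apply, integral_pow_mul_exp_neg_sq_mul_comp_div_sqrt g 2 ht, h0, pow_succ,
    sq_sqrt ht.le, mul_right_comm, mul_comm √t, mul_div_mul_right _ _ hs]


/-- Properties of `h(t) = log(z ∫ e^{-tu²} f(z+zu) du)`: it is finite
(the defining integral converges), `h' < 0`, `h'' > 0` on `(0,∞)`, and
`h'(t) ∼ -(2t)⁻¹` as `t → ∞`. -/
theorem stmt_11 (f : ℝ → ℝ) (hmeas : Measurable f) (hnonneg : ∀ x, 0 ≤ f x)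
    (hdens : ∫ x, f x = 1) (hbdd : ∃ A, ∀ x, f x ≤ A)
    (z : ℝ) (hz : 0 < z) (hcont : ContinuousAt f z) (hfz : 0 < f z)
    (h : ℝ → ℝ)
    (hdef : ∀ t, h t = Real.log (z * ∫ u, Real.exp (-t * u ^ 2) * f (z + z * u))) :
    (∀ t ≥ (0 : ℝ), Integrable (fun u => Real.exp (-t * u ^ 2) * f (z + z * u))) ∧
    ∃ h' h'' : ℝ → ℝ,
      (∀ t > (0 : ℝ), HasDerivAt h (h' t) t) ∧
      (∀ t > (0 : ℝ), HasDerivAt h' (h'' t) t) ∧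
      (∀ t > (0 : ℝ), h' t < 0 ∧ 0 < h'' t) ∧
      Tendsto (fun t => h' t / (-(2 * t)⁻¹)) atTop (nhds 1) := by
  obtain ⟨A, hA⟩ := hbdd
  set G : ℝ → ℝ := fun u => f (z + z * u)
  have hGmeas : Measurable G := by fun_prop
  have hGbdd : ∀ x, |G x| ≤ A := fun x => (abs_of_nonneg (hnonneg _)).le.trans (hA _)
  have hGnonneg : ∀ x, 0 ≤ G x := fun _ => hnonneg _
  have hGcont : ContinuousAt G 0 := hcont.comp_of_eq (by fun_prop) (by simp)
  have hG0 : 0 < G 0 := by simpa [G] using hfz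
  have hGint : Integrable G :=
    ((Integrable.of_integral_ne_zero (by simp [hdens])).comp_add_left z).comp_mul_left' hz.ne'
  have hM0 : ∀ t > (0 : ℝ), 0 < gaussMoment G 0 t := fun t ht =>
    gaussMoment_pos hGmeas hGbdd hGnonneg hGcont hG0 ht Even.zero
  have hM2 : ∀ t > (0 : ℝ), 0 < gaussMoment G 2 t := fun t ht =>
    gaussMoment_pos hGmeas hGbdd hGnonneg hGcont hG0 ht even_two
  have hh : h = fun s => log (z * gaussMoment G 0 s) :=
    funext fun s => by rw [hdef, gaussMoment_zero]
  refine ⟨fun t ht => integrable_exp_neg_mul_sq_mul hGint ht,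
    fun t => -(gaussMoment G 2 t / gaussMoment G 0 t),
    fun t => (gaussMoment G 4 t * gaussMoment G 0 t - gaussMoment G 2 t ^ 2) /
      gaussMoment G 0 t ^ 2,
    fun t ht => hh ▸ hasDerivAt_log_mul_gaussMoment_zero hGmeas hGbdd hz.ne' ht (hM0 t ht).ne',
    fun t ht => hasDerivAt_neg_gaussMoment_two_div_gaussMoment_zero hGmeas hGbdd ht (hM0 t ht).ne',
    fun t ht => ⟨neg_neg_of_pos (div_pos (hM2 t ht) (hM0 t ht)),
      div_pos (sub_pos.2 (sq_gaussMoment_two_lt hGmeas hGbdd hGnonneg hGcont hG0 ht))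
        (pow_pos (hM0 t ht) 2)⟩, ?_⟩
  have hlim := (tendsto_mul_gaussMoment_two_div_gaussMoment_zero hGmeas hGbdd hGcont
    hG0.ne').const_mul 2
  rw [mul_one_div_cancel two_ne_zero] at hlim
  refine hlim.congr' ?_
  filter_upwards [eventually_gt_atTop 0] with t ht
  field_simp
end
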